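/- arXiv:1311.4997 — 4 statements merged into one kernel-verified Lean document; each statement's English description precedes it below -/
import Mathlib

section
/- Let σ* be a group word in three variables with the properties: (i) σ*(a,b,c) = e whenever one of a,b,c is the identity, in every group; (ii) for some group and some triple, σ* is nonidentity. Define formulas on 6-tuples: φ₀(x̄,ȳ) says y₅⁻¹ x₀ y₅ = x₂; φ₁(x̄,ȳ) says x₅⁻¹ y₁ x₅ = y₃ ∧ x₅⁻¹ y₄ x₅ = y₄; ψ(x̄,ȳ,z̄) says σ*(x₀,y₁,z₄) = e ∧ σ*(x₂,y₃,z₄) ≠ e. Then there are no group G and 6-tuples ā₀, ā₁, ā₂, ā₃ ∈ G⁶ such that G ⊨ φ₀[ā₀,ā₁], G ⊨ φ₁[ā₁,ā₂], G ⊨ φ₁[ā₁,ā₃], and G ⊨ ψ[ā₀,ā₂,ā₃]. -/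
/-!
Conjugation by `a₁₅` is an automorphism of `G` which, by `φ₀` and `φ₁`, carries the triple
`(a₀₀, a₂₁, a₃₄)` to `(a₀₂, a₂₃, a₃₄)`. Evaluating a word commutes with automorphisms, so
`w(a₀₂, a₂₃, a₃₄)` is a conjugate of `w(a₀₀, a₂₁, a₃₄) = e`, contradicting `ψ`.
-/

namespace FreeGroup

variable {α G : Type*} [Group G]

theorem lift_conj_apply (g : G) (x : α → G) (w : FreeGroup α) :
    lift (fun i => g⁻¹ * x i * g) w = g⁻¹ * lift x w * g := by
  rw [← lift_unique ((MulAut.conj g⁻¹).toMonoidHom.comp (lift x)) (by simp)]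
  simp

end FreeGroup

theorem no_olive_configuration_in_groups_general (w : FreeGroup (Fin 3))
    (G : Type) [Group G] (a : Fin 4 → Fin 6 → G) :
    ¬ ((a 1 5)⁻¹ * a 0 0 * a 1 5 = a 0 2 ∧
       ((a 1 5)⁻¹ * a 2 1 * a 1 5 = a 2 3 ∧ (a 1 5)⁻¹ * a 2 4 * a 1 5 = a 2 4) ∧
       ((a 1 5)⁻¹ * a 3 1 * a 1 5 = a 3 3 ∧ (a 1 5)⁻¹ * a 3 4 * a 1 5 = a 3 4) ∧
       (FreeGroup.lift ![a 0 0, a 2 1, a 3 4] w = 1 ∧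
        FreeGroup.lift ![a 0 2, a 2 3, a 3 4] w ≠ 1)) := by
  rintro ⟨h0, ⟨h21, -⟩, ⟨-, h34⟩, hv, hnv⟩
  have hconj :
      ![a 0 2, a 2 3, a 3 4] = fun i => (a 1 5)⁻¹ * ![a 0 0, a 2 1, a 3 4] i * a 1 5 := by
    funext i
    fin_cases i
    exacts [h0.symm, h21.symm, h34.symm]
  apply hnv
  rw [hconj, FreeGroup.lift_conj_apply, hv, mul_one, inv_mul_cancel]

/-- If `w` is a group word in three variables which vanishes whenever one of its
arguments is the identity (i), and is somewhere nonidentity (ii), then there is no group `G`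
and 6-tuples `ā₀,ā₁,ā₂,ā₃ ∈ G⁶` satisfying `φ₀[ā₀,ā₁]`, `φ₁[ā₁,ā₂]`, `φ₁[ā₁,ā₃]` and
`ψ[ā₀,ā₂,ā₃]`, where `φ₀(x̄,ȳ) ≡ y₅⁻¹x₀y₅ = x₂`,
`φ₁(x̄,ȳ) ≡ x₅⁻¹y₁x₅ = y₃ ∧ x₅⁻¹y₄x₅ = y₄`, and
`ψ(x̄,ȳ,z̄) ≡ w(x₀,y₁,z₄) = e ∧ w(x₂,y₃,z₄) ≠ e`. -/
theorem no_olive_configuration_in_groups (w : FreeGroup (Fin 3))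
    (hw1 : ∀ (G : Type) [Group G] (a b c : G),
      a = 1 ∨ b = 1 ∨ c = 1 → FreeGroup.lift ![a, b, c] w = 1)
    (hw2 : ∃ (G : Type) (_ : Group G) (a b c : G), FreeGroup.lift ![a, b, c] w ≠ 1)
    (G : Type) [Group G] (a : Fin 4 → Fin 6 → G) :
    ¬ ((a 1 5)⁻¹ * a 0 0 * a 1 5 = a 0 2 ∧
       ((a 1 5)⁻¹ * a 2 1 * a 1 5 = a 2 3 ∧ (a 1 5)⁻¹ * a 2 4 * a 1 5 = a 2 4) ∧
       ((a 1 5)⁻¹ * a 3 1 * a 1 5 = a 3 3 ∧ (a 1 5)⁻¹ * a 3 4 * a 1 5 = a 3 4) ∧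
       (FreeGroup.lift ![a 0 0, a 2 1, a 3 4] w = 1 ∧
        FreeGroup.lift ![a 0 2, a 2 3, a 3 4] w ≠ 1)) :=
  no_olive_configuration_in_groups_general w G a
end

section
/- Let X be a set and Γ a set of relations on the free group F(X), each of the form σ*(x,y,z) = e for triples (x,y,z) of distinct elements of X, where σ*(a,b,c) = e holds in any group whenever one of a,b,c is the identity. Let G be the group presented by generators X and relations Γ. If Y ⊆ X is such that no relation σ*(x,y,z) = e in Γ has all of x, y, z belonging to Y, then the images of the elements of Y generate a free subgroup of G, freely generated by (the images of) Y. -/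
/-- The set of relations `σ*(x,y,z) = e` for triples `(x,y,z) ∈ T`, as words
in the free group on `X`: the word `w` in three variables is substituted with the
generators corresponding to the components of the triple. -/
def tripleRels (X : Type*) (w : FreeGroup (Fin 3)) (T : Set (X × X × X)) :
    Set (FreeGroup X) :=
  {r | ∃ t ∈ T, r = FreeGroup.lift ![FreeGroup.of t.1, FreeGroup.of t.2.1,
      FreeGroup.of t.2.2] w}

/-!
Sending the generators in `Y` to themselves and all other generators to `1` defines a
homomorphism `F(X) → F(Y)`. It kills every relation of `Γ`, because each relation has a
generator outside `Y` and `σ*` vanishes as soon as one argument is trivial. So it descends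
to `G → F(Y)`, which is a left inverse of the canonical map `F(Y) → G`.
-/

namespace FreeGroup

variable {α β : Type*}

theorem lift_lift_apply {G : Type*} [Group G] (f : β → G) (g : α → FreeGroup β)
    (x : FreeGroup α) : lift f (lift g x) = lift (fun a => lift f (g a)) x :=
  lift_unique ((lift f).comp (lift g)) (fun a => by simp)

open scoped Classical in
noncomputable def retractTo (Y : Set α) (x : α) : FreeGroup Y :=
  if h : x ∈ Y then of ⟨x, h⟩ else 1

theorem retractTo_of_mem {Y : Set α} {x : α} (h : x ∈ Y) : retractTo Y x = of ⟨x, h⟩ :=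
  dif_pos h

theorem retractTo_of_notMem {Y : Set α} {x : α} (h : x ∉ Y) : retractTo Y x = 1 :=
  dif_neg h

end FreeGroup

open FreeGroup

theorem PresentedGroup.lift_of_subtype_injective {X : Type*} {rels : Set (FreeGroup X)}
    (Y : Set X) (h : ∀ r ∈ rels, lift (retractTo Y) r = 1) :
    Function.Injective (lift fun y : Y => PresentedGroup.of (rels := rels) (y : X)) := by
  refine Function.LeftInverse.injective (g := PresentedGroup.toGroup h) fun u => ?_
  have hcomp : (PresentedGroup.toGroup h).comp (lift fun y : Y => PresentedGroup.of (y : X)) =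
      MonoidHom.id _ :=
    ext_hom _ _ fun y => by simp [PresentedGroup.toGroup.of, retractTo_of_mem y.2]
  exact DFunLike.congr_fun hcomp u

theorem lift_eq_one_of_mem_tripleRels {X : Type*} {w : FreeGroup (Fin 3)}
    (hw : ∀ (G : Type) [Group G] (a b c : G),
      a = 1 ∨ b = 1 ∨ c = 1 → FreeGroup.lift ![a, b, c] w = 1)
    {T : Set (X × X × X)} {H : Type} [Group H] {f : X → H}
    (hf : ∀ t ∈ T, f t.1 = 1 ∨ f t.2.1 = 1 ∨ f t.2.2 = 1) :
    ∀ r ∈ tripleRels X w T, lift f r = 1 := by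
  rintro r ⟨t, ht, rfl⟩
  have hsubst :
      (fun i => lift f (![of t.1, of t.2.1, of t.2.2] i)) = ![f t.1, f t.2.1, f t.2.2] := by
    ext i
    fin_cases i <;> simp
  rw [lift_lift_apply, hsubst]
  exact hw H _ _ _ (hf t ht)

theorem free_subgroup_of_presented_general (X : Type) (w : FreeGroup (Fin 3))
    (hw : ∀ (G : Type) [Group G] (a b c : G),
      a = 1 ∨ b = 1 ∨ c = 1 → FreeGroup.lift ![a, b, c] w = 1)
    (T : Set (X × X × X))
    (Y : Set X)
    (hY : ∀ t ∈ T, ¬ (t.1 ∈ Y ∧ t.2.1 ∈ Y ∧ t.2.2 ∈ Y)) :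
    Function.Injective
      (FreeGroup.lift (fun y : Y =>
        (PresentedGroup.of (rels := tripleRels X w T) (y : X)))) := by
  refine PresentedGroup.lift_of_subtype_injective Y (lift_eq_one_of_mem_tripleRels hw ?_)
  intro t ht
  have hout : t.1 ∉ Y ∨ t.2.1 ∉ Y ∨ t.2.2 ∉ Y := by simpa only [not_and_or] using hY t ht
  exact hout.imp retractTo_of_notMem (Or.imp retractTo_of_notMem retractTo_of_notMem)

/-- Let `G = ⟨X | Γ⟩` where `Γ` consists of relations `σ*(x,y,z) = e` for
triples of distinct elements of `X`, and `σ*` vanishes whenever one argument is the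
identity. If `Y ⊆ X` is such that no relation of `Γ` has all three of its generators
in `Y`, then the images of the elements of `Y` freely generate a free subgroup of `G`,
i.e. the canonical map `FreeGroup Y → G` is injective. -/
theorem free_subgroup_of_presented (X : Type) (w : FreeGroup (Fin 3))
    (hw : ∀ (G : Type) [Group G] (a b c : G),
      a = 1 ∨ b = 1 ∨ c = 1 → FreeGroup.lift ![a, b, c] w = 1)
    (T : Set (X × X × X))
    (hT : ∀ t ∈ T, t.1 ≠ t.2.1 ∧ t.1 ≠ t.2.2 ∧ t.2.1 ≠ t.2.2)
    (Y : Set X)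
    (hY : ∀ t ∈ T, ¬ (t.1 ∈ Y ∧ t.2.1 ∈ Y ∧ t.2.2 ∈ Y)) :
    Function.Injective
      (FreeGroup.lift (fun y : Y =>
        (PresentedGroup.of (rels := tripleRels X w T) (y : X)))) :=
  free_subgroup_of_presented_general X w hw T Y hY
end

section
/- Let X be a set, σ* a group word in three variables with σ*(a,b,c) = e whenever one of a,b,c is the identity, and Γ a set of relations σ*(x,y,z) = e with x,y,z distinct elements of X. Let G = ⟨X | Γ⟩. Then the images in G of distinct elements of X are distinct (i.e., X embeds into G). -/
/-!
Send one generator `x` to a generator of `ℤ` and all others to `0`. In a relation `σ*(a,b,c)` the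
arguments `a` and `b` are distinct, so one of them is not `x` and goes to the identity, where
`σ*` vanishes. Hence this assignment factors through `⟨X | Γ⟩`, and there it separates `x` from
every other generator.
-/

theorem FreeGroup.lift_lift_apply_s5 {α β G : Type*} [Group G] (f : β → G) (g : α → FreeGroup β)
    (w : FreeGroup α) : lift f (lift g w) = lift (fun a => lift f (g a)) w :=
  lift_unique ((lift f).comp (lift g)) (by simp)

theorem PresentedGroup.of_injective_of_mulSingle {X : Type*} [DecidableEq X]
    {rels : Set (FreeGroup X)}
    (h : ∀ x, ∀ r ∈ rels, FreeGroup.lift (Pi.mulSingle x (Multiplicative.ofAdd (1 : ℤ))) r = 1) :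
    Function.Injective (PresentedGroup.of (rels := rels)) := by
  intro x y hxy
  by_contra hne
  have hx := PresentedGroup.toGroup.of (h x) (x := x)
  have hy := PresentedGroup.toGroup.of (h x) (x := y)
  rw [← hxy, hx, Pi.mulSingle_eq_same, Pi.mulSingle_eq_of_ne (Ne.symm hne)] at hy
  exact one_ne_zero (ofAdd_eq_one.mp hy)

theorem lift_tripleRels_mulSingle_eq_one {X G : Type} [Group G] [DecidableEq X]
    (w : FreeGroup (Fin 3))
    (hw : ∀ a b c : G, a = 1 ∨ b = 1 ∨ c = 1 → FreeGroup.lift ![a, b, c] w = 1)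
    {T : Set (X × X × X)} (hT : ∀ t ∈ T, t.1 ≠ t.2.1) (x : X) (g : G) :
    ∀ r ∈ tripleRels X w T, FreeGroup.lift (Pi.mulSingle x g) r = 1 := by
  set φ : X → G := Pi.mulSingle x g
  rintro r ⟨⟨a, b, c⟩, ht, rfl⟩
  have hvec : (fun i => FreeGroup.lift φ (![FreeGroup.of a, FreeGroup.of b,
      FreeGroup.of c] i)) = ![φ a, φ b, φ c] := by
    funext i
    fin_cases i <;> simp
  rw [FreeGroup.lift_lift_apply_s5, hvec]
  apply hw
  rcases eq_or_ne a x with rfl | hax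
  · exact Or.inr (Or.inl (Pi.mulSingle_eq_of_ne (M := fun _ => G) (hT _ ht).symm g))
  · exact Or.inl (Pi.mulSingle_eq_of_ne (M := fun _ => G) hax g)

/-- If `σ*` is a group word in three variables vanishing whenever one of its
arguments is the identity, and `Γ` is a set of relations `σ*(x,y,z) = e` with `x,y,z`
distinct elements of `X`, then the images in `G = ⟨X | Γ⟩` of distinct elements of `X`
are distinct, i.e. `X` embeds into `G`. -/
theorem generators_distinct_in_presented (X : Type) (w : FreeGroup (Fin 3))
    (hw : ∀ (G : Type) [Group G] (a b c : G),
      a = 1 ∨ b = 1 ∨ c = 1 → FreeGroup.lift ![a, b, c] w = 1)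
    (T : Set (X × X × X))
    (hT : ∀ t ∈ T, t.1 ≠ t.2.1 ∧ t.1 ≠ t.2.2 ∧ t.2.1 ≠ t.2.2) :
    Function.Injective
      (fun x : X => (PresentedGroup.of (rels := tripleRels X w T) x)) := by
  classical
  exact PresentedGroup.of_injective_of_mulSingle fun x =>
    lift_tripleRels_mulSingle_eq_one w (hw _) (fun t ht => (hT t ht).1) x _
end

section
/- Let K be a finite group. Then K embeds into the symmetric group Sym(K) (acting on the underlying set of K), and for every partial isomorphism π between subgroups A, B of K there exists a permutation z ∈ Sym(K) such that z⁻¹ a z = π(a) for all a ∈ A, where K is identified with its image under the right-regular (Cayley) embedding. In particular, every finite group K with a family of partial isomorphisms embeds into a finite group in which each of these partial isomorphisms is realized by conjugation. -/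
/-!
Right multiplication by a subgroup `A` is a free action on `K`, so choosing coset
representatives identifies `K` with `(K ⧸ A) × A`, `A` acting on the second factor only.
If `π : A ≃* B`, then `A` and `B` have the same order and hence the same index, so a bijection
`K ⧸ B ≃ K ⧸ A` together with `π⁻¹ : B ≃ A` gives a permutation `z` of `K` with
`z (x * π a) = z x * a`, i.e. `z` conjugates right multiplication by `a` into right
multiplication by `π a`.
-/

namespace Subgroup

variable {G : Type*} [Group G]

noncomputable def equivQuotientProd (H : Subgroup G) : G ≃ (G ⧸ H) × H where
  toFun x := (x, ⟨(Quotient.out (x : G ⧸ H))⁻¹ * x,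
    QuotientGroup.leftRel_apply.mp (Quotient.exact (QuotientGroup.out_eq' (x : G ⧸ H)))⟩)
  invFun p := Quotient.out p.1 * (p.2 : G)
  left_inv x := by simp
  right_inv := by
    rintro ⟨q, h⟩
    have hq : ((Quotient.out q * (h : G) : G) : G ⧸ H) = q := by
      rw [QuotientGroup.mk_mul_of_mem _ h.2, QuotientGroup.out_eq']
    ext
    · exact hq
    · simp [hq]

theorem equivQuotientProd_symm_apply (H : Subgroup G) (q : G ⧸ H) (h : H) :
    (equivQuotientProd H).symm (q, h) = Quotient.out q * (h : G) := rfl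

theorem equivQuotientProd_mul (H : Subgroup G) (x : G) (h : H) :
    equivQuotientProd H (x * h) = ((equivQuotientProd H x).1, (equivQuotientProd H x).2 * h) := by
  have hx : ((x * h : G) : G ⧸ H) = x := QuotientGroup.mk_mul_of_mem _ h.2
  ext
  · exact hx
  · simp [equivQuotientProd, hx, mul_assoc]

noncomputable def permOfMulEquiv {A B : Subgroup G} (σ : G ⧸ B ≃ G ⧸ A) (π : A ≃* B) :
    Equiv.Perm G :=
  (equivQuotientProd B).trans ((σ.prodCongr π.symm.toEquiv).trans (equivQuotientProd A).symm)

theorem permOfMulEquiv_mul_apply {A B : Subgroup G} (σ : G ⧸ B ≃ G ⧸ A) (π : A ≃* B)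
    (x : G) (a : A) : permOfMulEquiv σ π (x * π a) = permOfMulEquiv σ π x * a := by
  simp only [permOfMulEquiv, Equiv.trans_apply, equivQuotientProd_mul, Equiv.prodCongr_apply,
    Prod.map, MulEquiv.toEquiv_eq_coe, EquivLike.coe_coe, map_mul, MulEquiv.symm_apply_apply,
    equivQuotientProd_symm_apply, coe_mul, mul_assoc]

theorem index_eq_of_mulEquiv [Finite G] {A B : Subgroup G} (π : A ≃* B) : A.index = B.index :=
  Nat.eq_of_mul_eq_mul_right Nat.card_pos <| by
    rw [index_mul_card, Nat.card_congr π.toEquiv, index_mul_card]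

theorem exists_perm_mul_mulEquiv_apply [Finite G] {A B : Subgroup G} (π : A ≃* B) :
    ∃ z : Equiv.Perm G, ∀ (x : G) (a : A), z (x * π a) = z x * a := by
  have : Nat.card (G ⧸ B) = Nat.card (G ⧸ A) := (index_eq_of_mulEquiv π).symm
  obtain ⟨σ⟩ := Finite.card_eq.mp this
  exact ⟨permOfMulEquiv σ π, permOfMulEquiv_mul_apply σ π⟩

end Subgroup

/-- Cayley embedding realizing partial isomorphisms: every finite group `K`
embeds into the (finite) symmetric group `Sym(K)` via an injective homomorphism `ρ`, in such
a way that for every partial isomorphism `π : A ≅ B` between subgroups of `K` there is a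
permutation `z ∈ Sym(K)` with `z⁻¹ (ρ a) z = ρ (π a)` for all `a ∈ A`. -/
theorem cayley_realizes_partial_isomorphisms (K : Type*) [Group K] [Finite K] :
    ∃ ρ : K →* Equiv.Perm K,
      Function.Injective ρ ∧
      ∀ (A B : Subgroup K) (π : A ≃* B),
        ∃ z : Equiv.Perm K, ∀ a : A, z⁻¹ * ρ a * z = ρ (π a) := by
  let ρ : K →* Equiv.Perm K := (MulAction.toPermHom Kᵐᵒᵖ K).comp (MulEquiv.inv' K).toMonoidHom
  have hρ : ∀ k x, ρ k x = x * k⁻¹ := fun _ _ => rfl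
  refine ⟨ρ, MulAction.toPerm_injective.comp (MulEquiv.inv' K).injective, fun A B π => ?_⟩
  obtain ⟨z, hz⟩ := Subgroup.exists_perm_mul_mulEquiv_apply π
  refine ⟨z, fun a => ?_⟩
  rw [mul_assoc, inv_mul_eq_iff_eq_mul]
  ext x
  simp only [Equiv.Perm.mul_apply, hρ]
  rw [← Subgroup.coe_inv, ← Subgroup.coe_inv, ← map_inv, hz]
end
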